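/- arXiv:1106.5971 — 4 statements merged into one kernel-verified Lean document; each statement's English description precedes it below -/
import Mathlib

section
/- Let P be a continuous probability transition kernel on a finite nonempty alphabet G. Then for every u ∈ [0,1) and every history w, there exists a unique k ∈ ℕ and a unique g ∈ G such that α_k(g|w_{-k:-1}) ≤ u < β_k(g|w_{-k:-1}); in other words, the intervals [α_k(g|w_{-k:-1}), β_k(g|w_{-k:-1})), for k ∈ ℕ and g ∈ G, form a partition of [0,1). -/
open Finset Filter

variable {G : Type*}

/-- The ball of all histories admitting `s` as a suffix.
A history is `w : ℕ → G`, index `i` encoding the symbol `w_{-(i+1)}` (index 0 = most recent).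
A word `s : List G` encodes `(s_{-n},…,s_{-1})` with list index `i` = symbol `s_{-(i+1)}`. -/
def tree (s : List G) : Set (ℕ → G) := {w | ∀ i : Fin s.length, w i = s.get i}

/-- The word `w_{-k:-1}` formed by the last `k` symbols of the history `w`. -/
def word (w : ℕ → G) (k : ℕ) : List G := List.ofFn fun i : Fin k => w i

/-- A probability transition kernel on `G`. -/
def IsKernel [Fintype G] (P : (ℕ → G) → G → ℝ) : Prop :=
  ∀ w, (∀ g, 0 ≤ P w g) ∧ ∑ g, P w g = 1

/-- Total variation distance between distributions on a finite alphabet. -/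
noncomputable def tvDist [Fintype G] (p q : G → ℝ) : ℝ := (1 / 2) * ∑ a, |p a - q a|

/-- Oscillation `η_P(s)` of the kernel `P` on the ball `tree s`. -/
noncomputable def eta [Fintype G] (P : (ℕ → G) → G → ℝ) (s : List G) : ℝ :=
  ⨆ w : tree s, ⨆ z : tree s, tvDist (P w) (P z)

/-- Coupling coefficient `a_{|s|}(g|s)`. -/
noncomputable def aCoef (P : (ℕ → G) → G → ℝ) (g : G) (s : List G) : ℝ :=
  ⨅ w : tree s, P w g

/-- Coupling coefficient `A_{|s|}(s)`. -/
noncomputable def ACoef [Fintype G] (P : (ℕ → G) → G → ℝ) (s : List G) : ℝ :=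
  ∑ g, aCoef P g s

/-- `A_k^- = inf { A_k(s) : |s| = k }`. -/
noncomputable def Aminus [Fintype G] (P : (ℕ → G) → G → ℝ) (k : ℕ) : ℝ :=
  ⨅ s : {s : List G // s.length = k}, ACoef P s.1

/-- Continuity of the kernel: continuity from the product topology (G discrete) to
the total variation distance. -/
def KernelContinuous [Fintype G] (P : (ℕ → G) → G → ℝ) : Prop :=
  ∀ w : ℕ → G, ∀ ε > 0, ∃ k : ℕ, ∀ z : ℕ → G, (∀ i < k, z i = w i) → tvDist (P w) (P z) < ε

/-- `α_k(g | w_{-k:-1})` with the convention `A_{-1}(ε) = a_{-1}(·|ε) = 0`. -/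
noncomputable def alphaCoef [Fintype G] [LinearOrder G] (P : (ℕ → G) → G → ℝ)
    (k : ℕ) (g : G) (w : ℕ → G) : ℝ :=
  (if k = 0 then 0 else ACoef P (word w (k - 1))) +
    ∑ h ∈ univ.filter (fun h => h < g),
      (aCoef P h (word w k) - if k = 0 then 0 else aCoef P h (word w (k - 1)))

/-- `β_k(g | w_{-k:-1})` with the convention `A_{-1}(ε) = a_{-1}(·|ε) = 0`. -/
noncomputable def betaCoef [Fintype G] [LinearOrder G] (P : (ℕ → G) → G → ℝ)
    (k : ℕ) (g : G) (w : ℕ → G) : ℝ :=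
  (if k = 0 then 0 else ACoef P (word w (k - 1))) +
    ∑ h ∈ univ.filter (fun h => h ≤ g),
      (aCoef P h (word w k) - if k = 0 then 0 else aCoef P h (word w (k - 1)))

/-- `φ` is the update rule of `P`: for every `u ∈ [0,1)` and history `w`, `φ u w` is the
(unique) symbol `g` such that `α_k(g|w_{-k:-1}) ≤ u < β_k(g|w_{-k:-1})` for some `k`. -/
def IsUpdateRule [Fintype G] [LinearOrder G] (P : (ℕ → G) → G → ℝ)
    (φ : ℝ → (ℕ → G) → G) : Prop :=
  ∀ u ∈ Set.Ico (0 : ℝ) 1, ∀ w : ℕ → G, ∃ k : ℕ,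
    alphaCoef P k (φ u w) w ≤ u ∧ u < betaCoef P k (φ u w) w

/-! Within level `k` the increments `a_k(h|·) - a_{k-1}(h|·)` are nonnegative and sum to
`A_k - A_{k-1}`, so the intervals `[α_k(g|·), β_k(g|·))`, taken in the order of `G`, tile
`[A_{k-1}, A_k)`; stacking the levels tiles `[0, sup_k A_k)`. Continuity of `P` makes
`A_k(w_{-k:-1})` tend to `1`, so this union is all of `[0,1)`. -/

theorem Set.subsingleton_setOf_mem_Ico {ι α : Type*} [LinearOrder ι] [Preorder α]
    {lo hi : ι → α} (h : ∀ ⦃i j⦄, i < j → hi i ≤ lo j) (u : α) :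
    {i | u ∈ Set.Ico (lo i) (hi i)}.Subsingleton := by
  intro i ⟨hi₁, hi₂⟩ j ⟨hj₁, hj₂⟩
  by_contra hne
  rcases lt_or_gt_of_ne hne with hij | hji
  · exact lt_irrefl u (hi₂.trans_le ((h hij).trans hj₁))
  · exact lt_irrefl u (hj₂.trans_le ((h hji).trans hi₁))

section PartialSums

variable {ι : Type*} [Fintype ι] [LinearOrder ι] {d : ι → ℝ}

theorem exists_sum_filter_lt_le_and_lt_sum_filter_le {v : ℝ} (hv₀ : 0 ≤ v)
    (hv : v < ∑ i, d i) :
    ∃ i, ∑ j ∈ univ.filter (· < i), d j ≤ v ∧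
      v < ∑ j ∈ univ.filter (· ≤ i), d j := by
  have hne : (univ : Finset ι).Nonempty := by
    by_contra h
    simp only [not_nonempty_iff_eq_empty.1 h, sum_empty] at hv
    linarith
  set S := univ.filter fun i => v < ∑ j ∈ univ.filter (· ≤ i), d j
  have hS : S.Nonempty := by
    refine ⟨univ.max' hne, mem_filter.2 ⟨mem_univ _, ?_⟩⟩
    rwa [filter_true_of_mem fun j _ => le_max' univ j (mem_univ j)]
  refine ⟨S.min' hS, ?_, (mem_filter.1 (S.min'_mem hS)).2⟩
  by_contra! hlt
  have hpred : (univ.filter (· < S.min' hS)).Nonempty := by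
    by_contra h
    rw [not_nonempty_iff_eq_empty.1 h, sum_empty] at hlt
    linarith
  set i₀ := (univ.filter (· < S.min' hS)).max' hpred
  have hi₀ : i₀ < S.min' hS := (mem_filter.1 (max'_mem _ hpred)).2
  -- below `min' S` the largest element `i₀` has the same lower set, so `i₀ ∈ S`
  have hsets : univ.filter (· < S.min' hS) = univ.filter (· ≤ i₀) := by
    ext j
    simp only [mem_filter, mem_univ, true_and]
    exact ⟨fun hj => le_max' _ j (mem_filter.2 ⟨mem_univ j, hj⟩),
      fun hj => hj.trans_lt hi₀⟩
  rw [hsets] at hlt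
  exact (S.min'_le i₀ (mem_filter.2 ⟨mem_univ _, hlt⟩)).not_gt hi₀

theorem sum_filter_le_le_sum_filter_lt (hd : ∀ i, 0 ≤ d i) {i i' : ι} (h : i < i') :
    ∑ j ∈ univ.filter (· ≤ i), d j ≤ ∑ j ∈ univ.filter (· < i'), d j :=
  sum_le_sum_of_subset_of_nonneg (fun j hj => by simp only [mem_filter] at hj ⊢; grind)
    fun j _ _ => hd j

end PartialSums

section StackedIntervals

variable {ι : Type*} [Fintype ι] [LinearOrder ι]

/- With `a k = A_{k-1}(w_{-k+1:-1})` and `d k h = a_k(h|w_{-k:-1}) - a_{k-1}(h|w_{-k+1:-1})`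
these are `α_k(i|w_{-k:-1})` and `β_k(i|w_{-k:-1})`. -/
def stackedLo (a : ℕ → ℝ) (d : ℕ → ι → ℝ) (k : ℕ) (i : ι) : ℝ :=
  a k + ∑ j ∈ univ.filter (· < i), d k j

def stackedHi (a : ℕ → ℝ) (d : ℕ → ι → ℝ) (k : ℕ) (i : ι) : ℝ :=
  a k + ∑ j ∈ univ.filter (· ≤ i), d k j

variable {a : ℕ → ℝ} {d : ℕ → ι → ℝ}

theorem stackedHi_le_stackedLo_of_lex_lt (hd : ∀ k i, 0 ≤ d k i)
    (hsucc : ∀ k, a (k + 1) = a k + ∑ i, d k i) {p q : ℕ × ι} (h : toLex p < toLex q) :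
    stackedHi a d p.1 p.2 ≤ stackedLo a d q.1 q.2 := by
  have ha : Monotone a := monotone_nat_of_le_succ fun k => by
    rw [hsucc]; linarith [sum_nonneg fun i (_ : i ∈ univ) => hd k i]
  rcases Prod.Lex.toLex_lt_toLex.1 h with hk | ⟨hk, hi⟩
  · calc stackedHi a d p.1 p.2 ≤ a p.1 + ∑ i, d p.1 i :=
          add_le_add_right (sum_le_sum_of_subset_of_nonneg (filter_subset _ _)
            fun i _ _ => hd _ i) _
      _ = a (p.1 + 1) := (hsucc _).symm
      _ ≤ a q.1 := ha hk
      _ ≤ stackedLo a d q.1 q.2 := le_add_of_nonneg_right (sum_nonneg fun i _ => hd _ i)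
  · rw [stackedHi, stackedLo, hk]
    exact add_le_add_right (sum_filter_le_le_sum_filter_lt (hd q.1) hi) _

theorem existsUnique_mem_Ico_stacked (hd : ∀ k i, 0 ≤ d k i) (ha₀ : a 0 = 0)
    (hsucc : ∀ k, a (k + 1) = a k + ∑ i, d k i) {u : ℝ} (hu₀ : 0 ≤ u)
    (hu : ∃ k, u < a k) :
    ∃! p : ℕ × ι, stackedLo a d p.1 p.2 ≤ u ∧ u < stackedHi a d p.1 p.2 := by
  refine existsUnique_of_exists_of_unique ?_ fun p q hp hq => toLex_inj.1 <|
    Set.subsingleton_setOf_mem_Ico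
      (lo := fun r : ℕ ×ₗ ι => stackedLo a d (ofLex r).1 (ofLex r).2)
      (hi := fun r => stackedHi a d (ofLex r).1 (ofLex r).2)
      (fun _ _ hrs => stackedHi_le_stackedLo_of_lex_lt hd hsucc hrs) u hp hq
  have hK : Nat.find hu ≠ 0 := fun h0 => by
    have := Nat.find_spec hu
    rw [h0, ha₀] at this
    linarith
  obtain ⟨k, hk⟩ := Nat.exists_eq_succ_of_ne_zero hK
  have hak : a k ≤ u := not_lt.1 (Nat.find_min hu (by omega))
  have hku : u < a k + ∑ i, d k i := by
    rw [← hsucc, ← Nat.succ_eq_add_one, ← hk]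
    exact Nat.find_spec hu
  obtain ⟨i, hi₁, hi₂⟩ :=
    exists_sum_filter_lt_le_and_lt_sum_filter_le (sub_nonneg.2 hak) (by linarith)
  exact ⟨(k, i), by simp only [stackedLo]; linarith, by simp only [stackedHi]; linarith⟩

end StackedIntervals

theorem abs_sub_le_two_mul_tvDist [Fintype G] (p q : G → ℝ) (g : G) :
    |p g - q g| ≤ 2 * tvDist p q := by
  have := single_le_sum (f := fun a => |p a - q a|) (fun a _ => abs_nonneg _) (mem_univ g)
  simp only [tvDist]
  linarith

theorem mem_tree_word_iff {w z : ℕ → G} {k : ℕ} :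
    z ∈ tree (word w k) ↔ ∀ i < k, z i = w i := by
  constructor
  · intro h i hi
    simpa [word] using h ⟨i, by simpa [word] using hi⟩
  · intro h i
    have hi : (i : ℕ) < k := by simpa [word] using i.2
    rw [h _ hi, List.get_eq_getElem]
    simp [word]

theorem self_mem_tree_word (w : ℕ → G) (k : ℕ) : w ∈ tree (word w k) :=
  mem_tree_word_iff.2 fun _ _ => rfl

theorem tree_word_antitone (w : ℕ → G) : Antitone fun k => tree (word w k) :=
  fun _ _ hkl _ hz =>
    mem_tree_word_iff.2 fun i hi => mem_tree_word_iff.1 hz i (hi.trans_le hkl)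

theorem le_aCoef_word {P : (ℕ → G) → G → ℝ} {w : ℕ → G} {k : ℕ} {g : G} {c : ℝ}
    (h : ∀ z ∈ tree (word w k), c ≤ P z g) : c ≤ aCoef P g (word w k) :=
  have : Nonempty (tree (word w k)) := ⟨⟨w, self_mem_tree_word w k⟩⟩
  le_ciInf fun z => h z z.2

section Coefficients

variable [Fintype G] {P : (ℕ → G) → G → ℝ}

theorem aCoef_nonneg (hP : IsKernel P) (g : G) (s : List G) : 0 ≤ aCoef P g s :=
  Real.iInf_nonneg fun z => (hP z).1 g

theorem aCoef_le_of_mem_tree (hP : IsKernel P) {s : List G} {z : ℕ → G} (hz : z ∈ tree s)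
    (g : G) : aCoef P g s ≤ P z g :=
  ciInf_le ⟨0, by rintro _ ⟨z', rfl⟩; exact (hP z').1 g⟩ (⟨z, hz⟩ : tree s)

theorem aCoef_word_mono (hP : IsKernel P) (w : ℕ → G) (g : G) :
    Monotone fun k => aCoef P g (word w k) :=
  fun _ _ hkl => le_aCoef_word fun _ hz =>
    aCoef_le_of_mem_tree hP (tree_word_antitone w hkl hz) g

theorem exists_lt_ACoef_word (hP : IsKernel P) (hc : KernelContinuous P) (w : ℕ → G)
    {u : ℝ} (hu : u < 1) : ∃ k, u < ACoef P (word w k) := by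
  set n : ℝ := (Fintype.card G : ℝ)
  have hn : 0 ≤ n := Nat.cast_nonneg _
  set ε := (1 - u) / (2 * n + 1)
  have hε : 0 < ε := div_pos (by linarith) (by linarith)
  have hεn : ε * (2 * n + 1) = 1 - u := div_mul_cancel₀ _ (by linarith)
  obtain ⟨k, hk⟩ := hc w ε hε
  have hclose : ∀ g, P w g - 2 * ε ≤ aCoef P g (word w k) := fun g =>
    le_aCoef_word fun z hz => by
      have := abs_sub_le_two_mul_tvDist (P w) (P z) g
      have := hk z (mem_tree_word_iff.1 hz)
      linarith [le_abs_self (P w g - P z g)]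
  refine ⟨k, ?_⟩
  calc u < 1 - 2 * ε * n := by linarith
    _ = ∑ g, (P w g - 2 * ε) := by
      rw [sum_sub_distrib, (hP w).2, sum_const, card_univ, nsmul_eq_mul]; ring
    _ ≤ ACoef P (word w k) := sum_le_sum fun g _ => hclose g

end Coefficients

theorem stmt_2_general [Fintype G] [LinearOrder G] (P : (ℕ → G) → G → ℝ)
    (hP : IsKernel P) (hc : KernelContinuous P) :
    ∀ u ∈ Set.Ico (0 : ℝ) 1, ∀ w : ℕ → G,
      ∃! p : ℕ × G, alphaCoef P p.1 p.2 w ≤ u ∧ u < betaCoef P p.1 p.2 w := by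
  rintro u ⟨hu₀, hu₁⟩ w
  obtain ⟨k, hk⟩ := exists_lt_ACoef_word hP hc w hu₁
  refine existsUnique_mem_Ico_stacked
    (a := fun k => if k = 0 then 0 else ACoef P (word w (k - 1)))
    (d := fun k h => aCoef P h (word w k) - if k = 0 then 0 else aCoef P h (word w (k - 1)))
    ?_ (if_pos rfl) ?_ hu₀ ⟨k + 1, hk⟩
  · rintro (_ | k) h
    · simpa using aCoef_nonneg hP h (word w 0)
    · simpa using aCoef_word_mono hP w h k.le_succ
  · rintro (_ | k) <;> simp [ACoef, sum_sub_distrib]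

/-- Proposition 3 (partition): for a continuous kernel `P`, every `u ∈ [0,1)` and every
history `w`, there is a unique pair `(k, g)` with
`α_k(g|w_{-k:-1}) ≤ u < β_k(g|w_{-k:-1})`: the intervals
`[α_k(g|w_{-k:-1}), β_k(g|w_{-k:-1}))` partition `[0,1)`. -/
theorem stmt_2 [Fintype G] [Nonempty G] [LinearOrder G] (P : (ℕ → G) → G → ℝ)
    (hP : IsKernel P) (hc : KernelContinuous P) :
    ∀ u ∈ Set.Ico (0 : ℝ) 1, ∀ w : ℕ → G,
      ∃! p : ℕ × G, alphaCoef P p.1 p.2 w ≤ u ∧ u < betaCoef P p.1 p.2 w :=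
  stmt_2_general P hP hc
end

section
/- Let G be a finite nonempty alphabet and let D be a prefix-closed complete suffix dictionary over G. Then for every finite word h that has a suffix in D and for every symbol a ∈ G, the word ha obtained by appending a to h as the new most recent symbol also has a suffix in D. -/
/-!
Extend the word `ha` to a history and let `t ∈ D` be its suffix in `D`; then `t` and `ha`
are comparable. If `t` is a suffix of `ha` we are done. Otherwise `t` strictly extends `ha`
into the past, so deleting the most recent symbol of `t` leaves a prefix of `t` that strictly
extends `h`. By prefix-closedness this prefix is a suffix of some `u ∈ D`, which is then
longer than `h` and has the given suffix `s ∈ D` of `h` as a suffix. Since no element of a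
CSD is a proper suffix of another (a history ending in `u` would have two suffixes in `D`),
`s = u`, contradicting `|s| ≤ |h| < |u|`.
-/

variable {G : Type*}

/-- A complete suffix dictionary: every history has exactly one suffix in `D`. -/
def IsCSD (D : Set (List G)) : Prop := ∀ w : ℕ → G, ∃! s, s ∈ D ∧ w ∈ tree s

/-- A prefix of a word `s = (s_{-n},…,s_{-1})` is a word `(s_{-n},…,s_{-k})`, `1 ≤ k ≤ n`;
in our encoding these are the words `s.drop j` for `j < s.length`. A CSD is prefix-closed
if every prefix of each of its elements is a suffix of some element. -/
def PrefixClosed (D : Set (List G)) : Prop :=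
  ∀ s ∈ D, ∀ j < s.length, ∃ t ∈ D, s.drop j <+: t

lemma mem_tree_of_prefix {s t : List G} {w : ℕ → G} (hst : s <+: t) (hw : w ∈ tree t) :
    w ∈ tree s := by
  obtain ⟨hlen, hget⟩ := List.prefix_iff_getElem.mp hst
  intro i
  simpa [hget] using hw ⟨i, lt_of_lt_of_le i.isLt hlen⟩

lemma prefix_of_mem_tree {s t : List G} {w : ℕ → G} (hs : w ∈ tree s) (ht : w ∈ tree t)
    (hlen : s.length ≤ t.length) : s <+: t := by
  refine List.prefix_iff_getElem.mpr ⟨hlen, fun i hi => ?_⟩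
  exact (hs ⟨i, hi⟩).symm.trans (ht ⟨i, lt_of_lt_of_le hi hlen⟩)

lemma exists_mem_tree [Nonempty G] (l : List G) : ∃ w, w ∈ tree l := by
  obtain ⟨c⟩ := ‹Nonempty G›
  refine ⟨fun i => l.getD i c, fun i => ?_⟩
  simp [List.getD]

namespace IsCSD

variable [Nonempty G] {D : Set (List G)}

lemma eq_of_prefix (hD : IsCSD D) {s u : List G} (hs : s ∈ D) (hu : u ∈ D) (hsu : s <+: u) :
    s = u := by
  obtain ⟨w, hw⟩ := exists_mem_tree u
  exact (hD w).unique ⟨hs, mem_tree_of_prefix hsu hw⟩ ⟨hu, hw⟩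

lemma exists_prefix_or_prefix (hD : IsCSD D) (l : List G) : ∃ t ∈ D, t <+: l ∨ l <+: t := by
  obtain ⟨w, hw⟩ := exists_mem_tree l
  obtain ⟨t, ⟨htD, ht⟩, -⟩ := hD w
  refine ⟨t, htD, ?_⟩
  rcases le_total t.length l.length with hlen | hlen
  · exact Or.inl (prefix_of_mem_tree ht hw hlen)
  · exact Or.inr (prefix_of_mem_tree hw ht hlen)

end IsCSD

theorem stmt_11_general (D : Set (List G)) (hD : IsCSD D)
    (hpc : PrefixClosed D) (h : List G) (hh : ∃ s ∈ D, s <+: h) (a : G) :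
    ∃ s ∈ D, s <+: (a :: h) := by
  have : Nonempty G := ⟨a⟩
  obtain ⟨s, hsD, hsh⟩ := hh
  obtain ⟨t, htD, hta | ⟨r, rfl⟩⟩ := hD.exists_prefix_or_prefix (a :: h)
  · exact ⟨t, htD, hta⟩
  cases r with
  | nil => exact ⟨_, htD, by simp⟩
  | cons b r =>
    exfalso
    obtain ⟨u, huD, hdu⟩ := hpc _ htD 1 (by simp)
    replace hdu : h ++ b :: r <+: u := by simpa using hdu
    have hlen_u : h.length < u.length := by
      have := hdu.length_le
      rw [List.length_append, List.length_cons] at this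
      omega
    have hsu : s <+: u := hsh.trans ((List.prefix_append h (b :: r)).trans hdu)
    have hlen_s := hsh.length_le
    rw [hD.eq_of_prefix hsD huD hsu] at hlen_s
    omega

/-- Lemma: if `D` is a prefix-closed CSD, then for every word `h` having a suffix in `D`
and every symbol `a`, the word `ha` (append `a` as new most recent symbol) also has a
suffix in `D`. -/
theorem stmt_11 [Fintype G] [Nonempty G] (D : Set (List G)) (hD : IsCSD D)
    (hpc : PrefixClosed D) (h : List G) (hh : ∃ s ∈ D, s <+: h) (a : G) :
    ∃ s ∈ D, s <+: (a :: h) :=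
  stmt_11_general D hD hpc h hh a
end

section
/- Let G be a finite nonempty alphabet, Y any type, and f : G^{-ℕ+} → Y a piecewise constant map (i.e., f is D-constant for some complete suffix dictionary D). Then there exists a complete suffix dictionary D^f such that f is D^f-constant and such that for every complete suffix dictionary D' for which f is D'-constant, every element of D' has a suffix in D^f (that is, D' refines D^f). -/
variable {G : Type*}

/-- A map `f` on histories is `D`-constant if it is constant on `tree s` for each `s ∈ D`. -/
def DConstant {Y : Type*} (D : Set (List G)) (f : (ℕ → G) → Y) : Prop :=
  ∀ s ∈ D, ∀ w ∈ tree s, ∀ z ∈ tree s, f w = f z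

/-!
The minimal dictionary `D^f` consists of the words `s` on whose ball `f` is constant but on
no ball of a proper suffix of `s`. Two suffixes of the same history are comparable, so
minimality makes each history have at most one suffix in `D^f`; and any word on whose ball
`f` is constant (in particular every word of a dictionary on which `f` is constant) has a
shortest suffix with the same property, which lies in `D^f`.
-/

lemma tree_anti {s t : List G} (h : s <+: t) : tree t ⊆ tree s := fun w hw i => by
  simpa [h.getElem i.isLt] using hw ⟨i, h.length_le.trans_lt' i.isLt⟩

lemma prefix_of_mem_tree_of_length_le {w : ℕ → G} {s t : List G} (hs : w ∈ tree s)
    (ht : w ∈ tree t) (hst : s.length ≤ t.length) : s <+: t := by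
  rw [List.prefix_iff_eq_take]
  refine List.ext_getElem (by simpa using hst) fun i his _ => ?_
  have hsi : w i = s[i] := hs ⟨i, his⟩
  have hti : w i = t[i] := ht ⟨i, his.trans_le hst⟩
  simp [← hsi, ← hti]

namespace List

variable {α : Type*}

def minimalPrefixes (P : List α → Prop) : Set (List α) :=
  {s | P s ∧ ∀ t, t <+: s → P t → t = s}

lemma exists_mem_minimalPrefixes_prefix {P : List α → Prop} {s : List α} (hs : P s) :
    ∃ t ∈ minimalPrefixes P, t <+: s := by
  obtain ⟨t, ⟨hts, hPt⟩, hmin⟩ :=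
    (measure List.length).wf.has_min {t | t <+: s ∧ P t} ⟨s, prefix_refl s, hs⟩
  refine ⟨t, ⟨hPt, fun u hut hPu => hut.eq_of_length ?_⟩, hts⟩
  exact le_antisymm hut.length_le (not_lt.mp (hmin u ⟨hut.trans hts, hPu⟩))

end List

open List in
lemma isCSD_minimalPrefixes {P : List G → Prop} (h : ∀ w, ∃ s, P s ∧ w ∈ tree s) :
    IsCSD (minimalPrefixes P) := by
  intro w
  obtain ⟨s, hPs, hws⟩ := h w
  obtain ⟨t, ht, hts⟩ := exists_mem_minimalPrefixes_prefix hPs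
  have hwt : w ∈ tree t := tree_anti hts hws
  refine ⟨t, ⟨ht, hwt⟩, fun u ⟨hu, hwu⟩ => ?_⟩
  rcases le_total u.length t.length with hle | hle
  · exact ht.2 u (prefix_of_mem_tree_of_length_le hwu hwt hle) hu.1
  · exact (hu.2 t (prefix_of_mem_tree_of_length_le hwt hwu hle) ht.1).symm

def ConstantOnTree {Y : Type*} (f : (ℕ → G) → Y) (s : List G) : Prop :=
  ∀ w ∈ tree s, ∀ z ∈ tree s, f w = f z

theorem stmt_13_general {Y : Type*} (f : (ℕ → G) → Y)
    (hf : ∃ D : Set (List G), IsCSD D ∧ DConstant D f) :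
    ∃ Df : Set (List G), IsCSD Df ∧ DConstant Df f ∧
      ∀ D' : Set (List G), IsCSD D' → DConstant D' f →
        ∀ s ∈ D', ∃ t ∈ Df, t <+: s := by
  obtain ⟨D, hD, hfD⟩ := hf
  have hcover : ∀ w, ∃ s, ConstantOnTree f s ∧ w ∈ tree s := fun w => by
    obtain ⟨s, ⟨hsD, hws⟩, -⟩ := hD w
    exact ⟨s, hfD s hsD, hws⟩
  exact ⟨List.minimalPrefixes (ConstantOnTree f), isCSD_minimalPrefixes hcover,
    fun s hs => hs.1, fun D' _ hfD' s hs => List.exists_mem_minimalPrefixes_prefix (hfD' s hs)⟩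

/-- Every piecewise constant map `f` has a minimal CSD `D^f`: `f` is `D^f`-constant and
every CSD `D'` on which `f` is constant refines `D^f` (each element of `D'` has a suffix
in `D^f`). -/
theorem stmt_13 [Fintype G] [Nonempty G] {Y : Type*} (f : (ℕ → G) → Y)
    (hf : ∃ D : Set (List G), IsCSD D ∧ DConstant D f) :
    ∃ Df : Set (List G), IsCSD Df ∧ DConstant Df f ∧
      ∀ D' : Set (List G), IsCSD D' → DConstant D' f →
        ∀ s ∈ D', ∃ t ∈ Df, t <+: s :=
  stmt_13_general f hf
end

section
/- Let (Y_m)_{m≥1} be i.i.d. ℕ-valued random variables and set p_k = P(Y_1 ≤ k) for k ∈ ℕ. If ∑_{m=0}^{∞} ∏_{k=0}^{m} p_k = ∞, then almost surely there exists an integer n ≥ 1 such that Y_m ≤ n − m for every 1 ≤ m ≤ n. -/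
/-!
Let `G n` be the coalescence event at lag `n`, of probability `u n = p₀ ⋯ p_{n-1}`, and `F j` the
event that the first coalescence happens at lag `j`. On `G n` there is a first lag `j ≤ n`, and the
constraints of `G n` on the indices in `(j, n]` are independent of `F j` and have probability
`u (n - j)`. This gives the renewal inequality `u n ≤ ∑_{j ≤ n} P(F j) u (n - j)`, which bounds
`∑ u` by `(1 - ∑ P(F j))⁻¹`. Divergence of `∑ u` therefore forces `P(⋃ F j) = ∑ P(F j) = 1`.
-/

open MeasureTheory ProbabilityTheory Finset
open scoped ENNReal

namespace ENNReal

theorem tsum_le_inv_one_sub_of_renewal {u c : ℕ → ℝ≥0∞} (hu0 : u 0 ≤ 1) (hu : ∀ n, u n ≠ ∞)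
    (h : ∀ n, u (n + 1) ≤ ∑ k ∈ range (n + 1), c k * u (n - k)) :
    ∑' n, u n ≤ (1 - ∑' k, c k)⁻¹ := by
  set f := ∑' k, c k
  have partial_le (N : ℕ) : ∑ n ∈ range N, u n ≤ f * ∑ n ∈ range N, u n + 1 :=
    calc ∑ n ∈ range N, u n
        ≤ ∑ n ∈ range (N + 1), u n := sum_le_sum_of_subset (range_subset_range.2 N.le_succ)
      _ = ∑ n ∈ range N, u (n + 1) + u 0 := sum_range_succ' u N
      _ ≤ ∑ n ∈ range N, ∑ k ∈ range (n + 1), c k * u (n - k) + 1 :=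
          add_le_add (sum_le_sum fun n _ => h n) hu0
      _ = ∑ m ∈ range N, c m * ∑ k ∈ range (N - m), u k + 1 := by
          rw [sum_range_diag_flip N fun m k => c m * u k]
          simp only [mul_sum]
      _ ≤ ∑ m ∈ range N, c m * ∑ n ∈ range N, u n + 1 := by
          gcongr
          exact N.sub_le _
      _ ≤ f * ∑ n ∈ range N, u n + 1 := by
          rw [← sum_mul]
          gcongr
          exact ENNReal.sum_le_tsum _
  have le_inv {a : ℝ≥0∞} (ha : a ≠ ∞) (h : a ≤ f * a + 1) : a ≤ (1 - f)⁻¹ := by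
    rw [ENNReal.le_inv_iff_mul_le, ENNReal.mul_sub fun _ _ => ha, mul_one, tsub_le_iff_right,
      add_comm, mul_comm]
    exact h
  rw [ENNReal.tsum_eq_iSup_nat]
  exact iSup_le fun N => le_inv (ENNReal.sum_ne_top.2 fun n _ => hu n) (partial_le N)

end ENNReal

namespace Coalescence

variable {Ω : Type*} (Y : ℕ → Ω → ℕ)

def constraintsAfter (j n : ℕ) : Set Ω := {ω | ∀ m, j < m → m ≤ n → Y m ω ≤ n - m}

def coalescesAt (n : ℕ) : Set Ω := constraintsAfter Y 0 n

def firstCoalescesAt (n : ℕ) : Set Ω := coalescesAt Y n \ ⋃ i ∈ Ico 1 n, coalescesAt Y i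

theorem constraintsAfter_eq_biInter (j n : ℕ) :
    constraintsAfter Y j n = ⋂ m ∈ Ioc j n, Y m ⁻¹' Set.Iic (n - m) := by
  ext ω
  simp [constraintsAfter]

theorem measurableSet_constraintsAfter {m : MeasurableSpace Ω} {j n : ℕ}
    (hY : ∀ k, j < k → k ≤ n → Measurable[m] (Y k)) :
    MeasurableSet[m] (constraintsAfter Y j n) := by
  rw [constraintsAfter_eq_biInter]
  refine Finset.measurableSet_biInter _ fun k hk => ?_
  rw [mem_Ioc] at hk
  exact hY k hk.1 hk.2 measurableSet_Iic

theorem measurableSet_firstCoalescesAt {m : MeasurableSpace Ω} {n : ℕ}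
    (hY : ∀ k, 1 ≤ k → k ≤ n → Measurable[m] (Y k)) :
    MeasurableSet[m] (firstCoalescesAt Y n) := by
  have hG {i : ℕ} (hi : i ≤ n) : MeasurableSet[m] (coalescesAt Y i) :=
    measurableSet_constraintsAfter Y fun k hk hki => hY k hk (hki.trans hi)
  refine (hG le_rfl).diff (Finset.measurableSet_biUnion _ fun i hi => hG ?_)
  exact (mem_Ico.1 hi).2.le

theorem disjoint_firstCoalescesAt {i j : ℕ} (hi : 1 ≤ i) (hij : i < j) :
    Disjoint (firstCoalescesAt Y i) (firstCoalescesAt Y j) :=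
  Set.disjoint_left.2 fun _ hωi hωj => hωj.2 (Set.mem_biUnion (mem_Ico.2 ⟨hi, hij⟩) hωi.1)

theorem coalescesAt_succ_subset (n : ℕ) :
    coalescesAt Y (n + 1) ⊆
      ⋃ k ∈ range (n + 1), firstCoalescesAt Y (k + 1) ∩ constraintsAfter Y (k + 1) (n + 1) := by
  classical
  intro ω hω
  have hex : ∃ k, ω ∈ coalescesAt Y (k + 1) := ⟨n, hω⟩
  have hfirst : ω ∈ firstCoalescesAt Y (Nat.find hex + 1) := by
    refine ⟨Nat.find_spec hex, ?_⟩
    simp only [Set.mem_iUnion, mem_Ico, not_exists]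
    intro i ⟨hi, hik⟩ hωi
    exact Nat.find_min hex (m := i - 1) (by omega) (by rwa [Nat.sub_add_cancel hi])
  exact Set.mem_biUnion (mem_range.2 (Nat.lt_succ_of_le (Nat.find_min' hex hω)))
    ⟨hfirst, fun m hm hmn => hω m (by omega) hmn⟩

section Probability

variable [MeasurableSpace Ω] {μ : Measure Ω}

theorem measure_biInter_preimage_eq_prod
    (hindep : iIndepFun (fun i : {m : ℕ // 1 ≤ m} => Y i) μ)
    (hident : ∀ m, 1 ≤ m → IdentDistrib (Y m) (Y 1) μ μ)
    {s : Finset ℕ} (hs : ∀ m ∈ s, 1 ≤ m) (A : ℕ → Set ℕ) :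
    μ (⋂ m ∈ s, Y m ⁻¹' A m) = ∏ m ∈ s, μ (Y 1 ⁻¹' A m) := by
  classical
  have hset : ⋂ m ∈ s, Y m ⁻¹' A m = ⋂ i ∈ s.subtype (1 ≤ ·), Y i ⁻¹' A i := by
    ext ω
    simp only [Set.mem_iInter, Set.mem_preimage, mem_subtype, Subtype.forall]
    exact ⟨fun h m _ hm => h m hm, fun h m hm => h m (hs m hm) hm⟩
  rw [hset, hindep.measure_inter_preimage_eq_mul _ fun _ _ => .of_discrete,
    prod_subtype_of_mem (fun m => μ (Y m ⁻¹' A m)) hs]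
  exact prod_congr rfl fun m hm => (hident m (hs m hm)).measure_mem_eq (.of_discrete)

theorem measure_constraintsAfter
    (hindep : iIndepFun (fun i : {m : ℕ // 1 ≤ m} => Y i) μ)
    (hident : ∀ m, 1 ≤ m → IdentDistrib (Y m) (Y 1) μ μ) (j n : ℕ) :
    μ (constraintsAfter Y j n) = ∏ k ∈ range (n - j), μ {ω | Y 1 ω ≤ k} := by
  rw [constraintsAfter_eq_biInter,
    measure_biInter_preimage_eq_prod Y hindep hident fun m hm => Nat.one_le_of_lt (mem_Ioc.1 hm).1]
  refine prod_nbij' (fun m => n - m) (fun k => n - k) ?_ ?_ ?_ ?_ fun _ _ => rfl <;>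
    simp only [mem_Ioc, mem_range] <;> intros <;> omega

theorem measure_coalescesAt
    (hindep : iIndepFun (fun i : {m : ℕ // 1 ≤ m} => Y i) μ)
    (hident : ∀ m, 1 ≤ m → IdentDistrib (Y m) (Y 1) μ μ) (n : ℕ) :
    μ (coalescesAt Y n) = ∏ k ∈ range n, μ {ω | Y 1 ω ≤ k} :=
  measure_constraintsAfter Y hindep hident 0 n

theorem measure_firstCoalescesAt_inter_constraintsAfter (hmeas : ∀ m, Measurable (Y m))
    (hindep : iIndepFun (fun i : {m : ℕ // 1 ≤ m} => Y i) μ) (j n : ℕ) :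
    μ (firstCoalescesAt Y j ∩ constraintsAfter Y j n) =
      μ (firstCoalescesAt Y j) * μ (constraintsAfter Y j n) := by
  have measurable_of_mem {S : Set {m : ℕ // 1 ≤ m}} {i : {m : ℕ // 1 ≤ m}} (hi : i ∈ S) :
      Measurable[⨆ i ∈ S, MeasurableSpace.comap (Y i) inferInstance] (Y i) :=
    (comap_measurable (Y i)).mono
      (le_iSup₂ (f := fun i (_ : i ∈ S) => MeasurableSpace.comap (Y i) inferInstance) i hi) le_rfl
  have hpast_future := indep_iSup_of_disjoint (fun i : {m : ℕ // 1 ≤ m} => (hmeas i).comap_le)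
    ((iIndepFun_iff_iIndep _ (fun i : {m : ℕ // 1 ≤ m} => Y i) μ).1 hindep)
    (S := {i | i.1 ≤ j}) (T := {i | j < i.1})
    (Set.disjoint_left.2 fun _ hi hi' => (Nat.lt_irrefl j) (Nat.lt_of_lt_of_le hi' hi))
  refine (Indep_iff _ _ μ).1 hpast_future _ _ ?_ ?_
  · exact measurableSet_firstCoalescesAt Y fun k hk hkj =>
      measurable_of_mem (S := {i | i.1 ≤ j}) (i := ⟨k, hk⟩) hkj
  · exact measurableSet_constraintsAfter Y fun k hjk _ =>
      measurable_of_mem (S := {i | j < i.1}) (i := ⟨k, by omega⟩) hjk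

theorem measure_coalescesAt_succ_le (hmeas : ∀ m, Measurable (Y m))
    (hindep : iIndepFun (fun i : {m : ℕ // 1 ≤ m} => Y i) μ)
    (hident : ∀ m, 1 ≤ m → IdentDistrib (Y m) (Y 1) μ μ) (n : ℕ) :
    μ (coalescesAt Y (n + 1)) ≤
      ∑ k ∈ range (n + 1), μ (firstCoalescesAt Y (k + 1)) * μ (coalescesAt Y (n - k)) :=
  calc μ (coalescesAt Y (n + 1))
      ≤ μ (⋃ k ∈ range (n + 1), firstCoalescesAt Y (k + 1) ∩ constraintsAfter Y (k + 1) (n + 1)) :=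
        measure_mono (coalescesAt_succ_subset Y n)
    _ ≤ ∑ k ∈ range (n + 1), μ (firstCoalescesAt Y (k + 1) ∩ constraintsAfter Y (k + 1) (n + 1)) :=
        measure_biUnion_finset_le _ _
    _ = ∑ k ∈ range (n + 1), μ (firstCoalescesAt Y (k + 1)) * μ (coalescesAt Y (n - k)) := by
        refine sum_congr rfl fun k _ => ?_
        rw [measure_firstCoalescesAt_inter_constraintsAfter Y hmeas hindep,
          measure_constraintsAfter Y hindep hident, measure_coalescesAt Y hindep hident,
          Nat.add_sub_add_right]

end Probability

end Coalescence

open Coalescence in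
/-- For i.i.d. ℕ-valued random variables `(Y_m)_{m ≥ 1}` with `p_k = P(Y_1 ≤ k)`, if
`∑_{m=0}^∞ ∏_{k=0}^m p_k = ∞`, then almost surely there exists `n ≥ 1` such that
`Y_m ≤ n − m` for every `1 ≤ m ≤ n` (the coalescence event at some lag `n` occurs). -/
theorem stmt_16 {Ω : Type*} [MeasurableSpace Ω] (μ : Measure Ω) [IsProbabilityMeasure μ]
    (Y : ℕ → Ω → ℕ) (hmeas : ∀ m, Measurable (Y m))
    (hindep : iIndepFun (fun i : {m : ℕ // 1 ≤ m} => Y i) μ)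
    (hident : ∀ m, 1 ≤ m → IdentDistrib (Y m) (Y 1) μ μ)
    (hdiv : ∑' m : ℕ, ∏ k ∈ Finset.range (m + 1), μ {ω | Y 1 ω ≤ k} = ⊤) :
    ∀ᵐ ω ∂μ, ∃ n : ℕ, 1 ≤ n ∧ ∀ m, 1 ≤ m → m ≤ n → Y m ω ≤ n - m := by
  set F : ℕ → Set Ω := fun k => firstCoalescesAt Y (k + 1)
  have hF (k : ℕ) : MeasurableSet (F k) :=
    measurableSet_firstCoalescesAt Y fun m _ _ => hmeas m
  have hdisj : Pairwise (Function.onFun Disjoint F) := (pairwise_disjoint_on F).2 fun i j hij =>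
    disjoint_firstCoalescesAt Y (Nat.le_add_left 1 i) (Nat.add_lt_add_right hij 1)
  have hsum_top : ∑' n, μ (coalescesAt Y n) = ∞ := by
    simp only [measure_coalescesAt Y hindep hident]
    exact top_unique (hdiv ▸ ENNReal.tsum_comp_le_tsum_of_injective (add_left_injective 1) _)
  have hrenewal := ENNReal.tsum_le_inv_one_sub_of_renewal (u := fun n => μ (coalescesAt Y n))
    prob_le_one (fun n => measure_ne_top μ _) (measure_coalescesAt_succ_le Y hmeas hindep hident)
  rw [hsum_top, top_le_iff, ENNReal.inv_eq_top, tsub_eq_zero_iff_le] at hrenewal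
  have hF_full : μ (⋃ k, F k) = 1 :=
    le_antisymm prob_le_one (measure_iUnion hdisj hF ▸ hrenewal)
  rw [ae_iff]
  refine measure_mono_null (fun ω hω => ?_) ((prob_compl_eq_zero_iff (.iUnion hF)).2 hF_full)
  intro hωF
  obtain ⟨k, hk⟩ := Set.mem_iUnion.1 hωF
  exact hω ⟨k + 1, k.succ_pos, fun m hm hmk => hk.1 m hm hmk⟩
end
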